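/- arXiv:2212.11486 — 3 statements merged into one kernel-verified Lean document; each statement's English description precedes it below -/
import Mathlib

section
/- Let d ≥ 1, let F : ℝ^d → ℝ be differentiable, let λ > 0, μ > 0, G ≥ 0. Suppose F is λ-strongly convex (for all x, y: F(y) ≥ F(x) + ⟪∇F(x), y − x⟫ + (λ/2)‖y − x‖²) and μ-smooth (∇F is μ-Lipschitz), and w* ∈ ℝ^d satisfies ∇F(w*) = 0. On a probability space, let (w_t)_{t≥1} and (ĝ_t)_{t≥1} be sequences of square-integrable random vectors in ℝ^d such that w_1 is deterministic, for every t the conditional expectation of ĝ_t given σ(w_1, …, w_t) equals ∇F(w_t) almost surely, E[‖ĝ_t‖²] ≤ G², and w_{t+1} = w_t − (1/(λ t)) ĝ_t. Then for every T ≥ 1, E[F(w_T)] − F(w*) ≤ 2 μ G² / (λ² T). -/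
open MeasureTheory
open scoped RealInnerProductSpace

lemma aux_condExpL2_ae_eq_condexp
    {Ω : Type*} {m : MeasurableSpace Ω} [m0 : MeasurableSpace Ω] (hm : m ≤ m0)
    {ℙ : Measure Ω} [IsFiniteMeasure ℙ] {d : ℕ}
    {f : Ω → EuclideanSpace ℝ (Fin d)} (hf : MemLp f 2 ℙ) :
    ((condExpL2 (EuclideanSpace ℝ (Fin d)) ℝ (μ := ℙ) hm (hf.toLp f) : Ω →₂[ℙ] (EuclideanSpace ℝ (Fin d))) : Ω → EuclideanSpace ℝ (Fin d))
      =ᵐ[ℙ] condExp m ℙ f := by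
  refine ae_eq_condExp_of_forall_setIntegral_eq hm (hf.integrable one_le_two)
    (fun s hs hμs => ?_) (fun s hs hμs => ?_) ?_
  · exact integrableOn_Lp_of_measure_ne_top _ fact_one_le_two_ennreal.elim hμs.ne
  · rw [integral_condExpL2_eq hm (hf.toLp f) hs hμs.ne]
    exact setIntegral_congr_ae (hm s hs) (hf.coeFn_toLp.mono fun x hx _ => hx)
  · exact lpMeas.aestronglyMeasurable _

lemma aux_pullout
    {Ω : Type*} {m : MeasurableSpace Ω} [m0 : MeasurableSpace Ω] (hm : m ≤ m0)
    {ℙ : Measure Ω} [IsProbabilityMeasure ℙ] {d : ℕ}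
    {gg f : Ω → EuclideanSpace ℝ (Fin d)} (hgg : MemLp gg 2 ℙ) (hf : MemLp f 2 ℙ)
    (hfm : AEStronglyMeasurable[m] f ℙ) :
    ∫ ω, ⟪gg ω, f ω⟫ ∂ℙ = ∫ ω, ⟪(condExp m ℙ gg) ω, f ω⟫ ∂ℙ := by
  have h1 : ∫ ω, ⟪gg ω, f ω⟫ ∂ℙ = inner (𝕜 := ℝ) (hgg.toLp gg) (hf.toLp f) := by
    rw [L2.inner_def]
    refine integral_congr_ae ?_
    filter_upwards [hgg.coeFn_toLp, hf.coeFn_toLp] with ω ha hb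
    rw [ha, hb]
  have h2 := inner_condExpL2_eq_inner_fun (𝕜 := ℝ) (μ := ℙ) hm (hgg.toLp gg) (hf.toLp f)
    (hfm.congr hf.coeFn_toLp.symm)
  rw [h1, ← h2, L2.inner_def]
  refine integral_congr_ae ?_
  filter_upwards [aux_condExpL2_ae_eq_condexp hm hgg, hf.coeFn_toLp] with ω ha hb
  rw [ha, hb]

lemma aux_sq_integral_le {Ω : Type*} [MeasurableSpace Ω] {ℙ : Measure Ω} [IsProbabilityMeasure ℙ]
    {h : Ω → ℝ} (h1 : Integrable h ℙ) (h2 : Integrable (fun ω => h ω ^ 2) ℙ) :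
    (∫ ω, h ω ∂ℙ) ^ 2 ≤ ∫ ω, h ω ^ 2 ∂ℙ := by
  set c := ∫ ω, h ω ∂ℙ with hc
  have key : 0 ≤ ∫ ω, (h ω - c)^2 ∂ℙ := integral_nonneg fun ω => sq_nonneg _
  have expand : ∫ ω, (h ω - c)^2 ∂ℙ = (∫ ω, h ω ^2 ∂ℙ) - c^2 := by
    calc ∫ ω, (h ω - c)^2 ∂ℙ = ∫ ω, (h ω^2 - (2*c)*h ω + c^2) ∂ℙ := by
          congr 1; funext ω; ring
    _ = ((∫ ω, h ω^2 ∂ℙ) - (2*c)*(∫ ω, h ω ∂ℙ)) + c^2 := by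
          rw [integral_add (f := fun ω => h ω^2 - (2*c)*h ω) (g := fun _ => c^2)
              (h2.sub (h1.const_mul (2*c))) (integrable_const _),
            integral_sub h2 (h1.const_mul (2*c)), integral_const_mul, integral_const]
          simp
    _ = (∫ ω, h ω ^2 ∂ℙ) - c^2 := by rw [← hc]; ring
  linarith

set_option maxHeartbeats 1000000 in
/-- Paper's Theorem 1: convergence rate of SGD with step size `1/(λ t)` and unbiased
gradient estimates of bounded second moment `G²`, for a `λ`-strongly convex and
`μ`-smooth objective `F`. -/
theorem sgd_convergence_rate
    (d : ℕ) (hd : 1 ≤ d)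
    (F : EuclideanSpace ℝ (Fin d) → ℝ)
    (gradF : EuclideanSpace ℝ (Fin d) → EuclideanSpace ℝ (Fin d))
    (hF : ∀ x, HasGradientAt F (gradF x) x)
    (lam μ G : ℝ) (hlam : 0 < lam) (hμ : 0 < μ) (hG : 0 ≤ G)
    (hstrong : ∀ x y, F y ≥ F x + ⟪gradF x, y - x⟫ + (lam / 2) * ‖y - x‖ ^ 2)
    (hsmooth : LipschitzWith μ.toNNReal gradF)
    (wstar : EuclideanSpace ℝ (Fin d)) (hstar : gradF wstar = 0)
    {Ω : Type*} [MeasurableSpace Ω] (ℙ : Measure Ω) [IsProbabilityMeasure ℙ]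
    (w g : ℕ → Ω → EuclideanSpace ℝ (Fin d))
    (hwL2 : ∀ t, 1 ≤ t → MemLp (w t) 2 ℙ)
    (hgL2 : ∀ t, 1 ≤ t → MemLp (g t) 2 ℙ)
    (w1 : EuclideanSpace ℝ (Fin d)) (hw1 : ∀ ω, w 1 ω = w1)
    (hunbiased : ∀ t, 1 ≤ t →
      condExp (⨆ i ∈ Finset.Icc 1 t, MeasurableSpace.comap (w i) inferInstance) ℙ (g t)
        =ᵐ[ℙ] fun ω => gradF (w t ω))
    (hmom : ∀ t, 1 ≤ t → ∫ ω, ‖g t ω‖ ^ 2 ∂ℙ ≤ G ^ 2)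
    (hupdate : ∀ t, 1 ≤ t → ∀ ω, w (t + 1) ω = w t ω - (1 / (lam * t)) • g t ω)
    (T : ℕ) (hT : 1 ≤ T) :
    (∫ ω, F (w T ω) ∂ℙ) - F wstar ≤ 2 * μ * G ^ 2 / (lam ^ 2 * T) := by
  -- deterministic consequences of convexity/smoothness
  have hgradb : ∀ x, ‖gradF x‖ ≤ μ * ‖x - wstar‖ := by
    intro x
    have h := hsmooth.dist_le_mul x wstar
    rw [dist_eq_norm, dist_eq_norm, hstar, sub_zero, Real.coe_toNNReal _ hμ.le] at h
    exact h
  have hconv : ∀ x, lam * ‖x - wstar‖^2 ≤ ⟪gradF x, x - wstar⟫ := by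
    intro x
    have h1 := hstrong x wstar
    have h2 := hstrong wstar x
    rw [hstar, inner_zero_left] at h2
    rw [norm_sub_rev, show wstar - x = -(x - wstar) by abel, inner_neg_right] at h1
    linarith
  have hFub : ∀ x, F x - F wstar ≤ μ * ‖x - wstar‖^2 := by
    intro x
    have h1 := hstrong x wstar
    rw [norm_sub_rev, show wstar - x = -(x - wstar) by abel, inner_neg_right] at h1
    have hcs : ⟪gradF x, x - wstar⟫ ≤ ‖gradF x‖ * ‖x - wstar‖ := real_inner_le_norm _ _
    have hb := hgradb x
    have hn : (0:ℝ) ≤ ‖x - wstar‖ := norm_nonneg _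
    nlinarith [sq_nonneg ‖x - wstar‖, mul_le_mul_of_nonneg_right hb hn]
  have hFlb : ∀ x, 0 ≤ F x - F wstar := by
    intro x
    have h2 := hstrong wstar x
    rw [hstar, inner_zero_left] at h2
    nlinarith [sq_nonneg ‖x - wstar‖]
  -- integrability facts
  have hv : ∀ t, 1 ≤ t → MemLp (fun ω => w t ω - wstar) 2 ℙ :=
    fun t ht => (hwL2 t ht).sub (memLp_const _)
  have hvsm : ∀ t, 1 ≤ t → AEStronglyMeasurable (fun ω => w t ω - wstar) ℙ :=
    fun t ht => (hv t ht).1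
  have hInt_v2 : ∀ t, 1 ≤ t → Integrable (fun ω => ‖w t ω - wstar‖^2) ℙ :=
    fun t ht => (memLp_two_iff_integrable_sq_norm (hvsm t ht)).1 (hv t ht)
  have hInt_g2 : ∀ t, 1 ≤ t → Integrable (fun ω => ‖g t ω‖^2) ℙ :=
    fun t ht => (memLp_two_iff_integrable_sq_norm (hgL2 t ht).1).1 (hgL2 t ht)
  set A : ℕ → ℝ := fun t => ∫ ω, ‖w t ω - wstar‖^2 ∂ℙ with hA
  have hA0 : ∀ t, 0 ≤ A t := fun t => integral_nonneg fun ω => sq_nonneg _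
  have hInt_inner : ∀ t, 1 ≤ t → Integrable (fun ω => ⟪g t ω, w t ω - wstar⟫) ℙ := by
    intro t ht
    refine (L2.integrable_inner (𝕜 := ℝ) ((hgL2 t ht).toLp _) ((hv t ht).toLp _)).congr ?_
    filter_upwards [(hgL2 t ht).coeFn_toLp, (hv t ht).coeFn_toLp] with ω h1 h2
    rw [h1, h2]
  have hgradsm : ∀ t, 1 ≤ t → AEStronglyMeasurable (fun ω => gradF (w t ω)) ℙ :=
    fun t ht => hsmooth.continuous.comp_aestronglyMeasurable (hwL2 t ht).1
  have hInt_ginner : ∀ t, 1 ≤ t → Integrable (fun ω => ⟪gradF (w t ω), w t ω - wstar⟫) ℙ := by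
    intro t ht
    refine Integrable.mono' ((hInt_v2 t ht).const_mul μ)
      ((hgradsm t ht).inner (hvsm t ht)) (Filter.Eventually.of_forall fun ω => ?_)
    calc ‖⟪gradF (w t ω), w t ω - wstar⟫‖ ≤ ‖gradF (w t ω)‖ * ‖w t ω - wstar‖ := by
          rw [Real.norm_eq_abs]; exact abs_real_inner_le_norm _ _
      _ ≤ μ * ‖w t ω - wstar‖^2 := by
          nlinarith [hgradb (w t ω), norm_nonneg (w t ω - wstar)]
  -- the key conditional-expectation identity
  have hkey : ∀ t, 1 ≤ t → ∫ ω, ⟪g t ω, w t ω - wstar⟫ ∂ℙ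
      = ∫ ω, ⟪gradF (w t ω), w t ω - wstar⟫ ∂ℙ := by
    intro t ht
    by_cases hm : (⨆ i ∈ Finset.Icc 1 t, MeasurableSpace.comap (w i) inferInstance)
        ≤ ‹MeasurableSpace Ω›
    · have hwtm : Measurable[⨆ i ∈ Finset.Icc 1 t, MeasurableSpace.comap (w i) inferInstance]
          (w t) := by
        refine Measurable.of_comap_le ?_
        exact le_iSup₂ (f := fun i _ => MeasurableSpace.comap (w i) inferInstance) t
          (Finset.mem_Icc.2 ⟨ht, le_refl t⟩)
      have hvm : AEStronglyMeasurable[⨆ i ∈ Finset.Icc 1 t, MeasurableSpace.comap (w i) inferInstance]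
          (fun ω => w t ω - wstar) ℙ :=
        (hwtm.stronglyMeasurable.sub stronglyMeasurable_const).aestronglyMeasurable
      rw [aux_pullout hm (hgL2 t ht) (hv t ht) hvm]
      refine integral_congr_ae ?_
      filter_upwards [hunbiased t ht] with ω hω
      rw [hω]
    · have h0 : (fun ω => gradF (w t ω)) =ᵐ[ℙ] 0 := by
        have h := hunbiased t ht
        rw [condExp_of_not_le hm] at h
        exact h.symm
      have hv0 : ∀ᵐ ω ∂ℙ, w t ω - wstar = 0 := by
        filter_upwards [h0] with ω hω
        simp only [Pi.zero_apply] at hω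
        have h1 := hconv (w t ω)
        rw [hω, inner_zero_left] at h1
        have heq : lam * ‖w t ω - wstar‖^2 = 0 :=
          le_antisymm h1 (mul_nonneg hlam.le (sq_nonneg _))
        have h3 : ‖w t ω - wstar‖^2 = 0 := by
          rcases mul_eq_zero.mp heq with h | h
          · exact absurd h hlam.ne'
          · exact h
        exact norm_eq_zero.mp (pow_eq_zero_iff two_ne_zero |>.mp h3)
      have e1 : ∫ ω, ⟪g t ω, w t ω - wstar⟫ ∂ℙ = 0 := by
        rw [integral_congr_ae (g := fun _ => (0:ℝ)) ?_, integral_zero]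
        filter_upwards [hv0] with ω hω
        rw [hω, inner_zero_right]
      have e2 : ∫ ω, ⟪gradF (w t ω), w t ω - wstar⟫ ∂ℙ = 0 := by
        rw [integral_congr_ae (g := fun _ => (0:ℝ)) ?_, integral_zero]
        filter_upwards [hv0] with ω hω
        rw [hω, inner_zero_right]
      rw [e1, e2]
  -- one-step recursion
  have hrec : ∀ t, 1 ≤ t → A (t+1) ≤ A t - (2/(t:ℝ)) * A t + G^2/(lam^2 * (t:ℝ)^2) := by
    intro t ht
    have htpos : (0:ℝ) < t := by exact_mod_cast ht
    set η : ℝ := 1/(lam * t) with hη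
    have hηpos : 0 < η := by positivity
    have hexp : ∀ ω, ‖w (t+1) ω - wstar‖^2
        = ‖w t ω - wstar‖^2 - 2*η*⟪g t ω, w t ω - wstar⟫ + η^2*‖g t ω‖^2 := by
      intro ω
      rw [hupdate t ht ω, show w t ω - (1/(lam * (t:ℝ))) • g t ω - wstar
          = (w t ω - wstar) - η • g t ω by rw [hη]; abel, norm_sub_sq_real,
        real_inner_smul_right, norm_smul, real_inner_comm]
      rw [Real.norm_eq_abs, abs_of_pos hηpos]
      ring
    have hsplit : A (t+1) = A t - 2*η*(∫ ω, ⟪g t ω, w t ω - wstar⟫ ∂ℙ)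
        + η^2*(∫ ω, ‖g t ω‖^2 ∂ℙ) := by
      have e : A (t+1) = ∫ ω, (‖w t ω - wstar‖^2 - 2*η*⟪g t ω, w t ω - wstar⟫
          + η^2*‖g t ω‖^2) ∂ℙ := by
        simp only [hA]; congr 1; funext ω; rw [hexp ω]
      rw [e, integral_add (f := fun ω => ‖w t ω - wstar‖^2 - 2*η*⟪g t ω, w t ω - wstar⟫)
          (g := fun ω => η^2*‖g t ω‖^2)
          ((hInt_v2 t ht).sub ((hInt_inner t ht).const_mul (2*η)))
          ((hInt_g2 t ht).const_mul (η^2)),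
        integral_sub (hInt_v2 t ht) ((hInt_inner t ht).const_mul (2*η)),
        integral_const_mul, integral_const_mul]
    have hlow : lam * A t ≤ ∫ ω, ⟪g t ω, w t ω - wstar⟫ ∂ℙ := by
      rw [hkey t ht]
      calc lam * A t = ∫ ω, lam * ‖w t ω - wstar‖^2 ∂ℙ := (integral_const_mul _ _).symm
        _ ≤ ∫ ω, ⟪gradF (w t ω), w t ω - wstar⟫ ∂ℙ :=
          integral_mono ((hInt_v2 t ht).const_mul lam) (hInt_ginner t ht)
            fun ω => hconv (w t ω)
    have hup := hmom t ht
    have e1 : 2/(t:ℝ) = 2*η*lam := by rw [hη]; field_simp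
    have e2 : G^2/(lam^2 * (t:ℝ)^2) = η^2*G^2 := by rw [hη]; ring
    have k1 : (2*η*lam) * A t ≤ 2*η*(∫ ω, ⟪g t ω, w t ω - wstar⟫ ∂ℙ) := by
      nlinarith [hlow, hηpos]
    have k2 : η^2*(∫ ω, ‖g t ω‖^2 ∂ℙ) ≤ η^2*G^2 := by nlinarith [sq_nonneg η]
    rw [hsplit, e1, e2]
    linarith
  -- main induction
  have hmain : ∀ t, 1 ≤ t → A t ≤ 2*G^2/(lam^2 * t) := by
    intro t
    induction t with
    | zero => intro h; omega
    | succ n ih =>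
      intro _
      by_cases hn0 : n = 0
      · -- base case t = 1
        subst hn0
        have hA1 : A 1 = ‖w1 - wstar‖^2 := by
          simp only [hA]
          rw [show (fun ω => ‖w 1 ω - wstar‖^2) = fun _ => ‖w1 - wstar‖^2 from
            funext fun ω => by rw [hw1], integral_const]
          simp
        have hm1 : (⨆ i ∈ Finset.Icc 1 1, MeasurableSpace.comap (w i) inferInstance)
            = (⊥ : MeasurableSpace Ω) := by
          have hw1' : w 1 = fun _ => w1 := funext hw1
          refine le_antisymm ?_ bot_le
          refine iSup₂_le fun i hi => ?_
          obtain rfl : i = 1 := by simpa using hi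
          rw [hw1', MeasurableSpace.comap_const]
        have hgw1 : gradF w1 = ∫ ω, g 1 ω ∂ℙ := by
          have h := hunbiased 1 le_rfl
          rw [hm1, condExp_bot] at h
          obtain ⟨ω, hω⟩ := h.exists
          simpa [hw1] using hω.symm
        have hg1int : Integrable (g 1) ℙ := (hgL2 1 le_rfl).integrable one_le_two
        have hgn : ‖gradF w1‖ ≤ G := by
          rw [hgw1]
          refine le_trans (norm_integral_le_integral_norm _) ?_
          have hsq := aux_sq_integral_le hg1int.norm
            (by simpa using hInt_g2 1 le_rfl)
          have hnn : 0 ≤ ∫ ω, ‖g 1 ω‖ ∂ℙ := integral_nonneg fun ω => norm_nonneg _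
          nlinarith [hmom 1 le_rfl]
        have hb : ‖w1 - wstar‖^2 ≤ G^2/lam^2 := by
          have h1 := hconv w1
          have hcs : ⟪gradF w1, w1 - wstar⟫ ≤ ‖gradF w1‖ * ‖w1 - wstar‖ :=
            real_inner_le_norm _ _
          have hn : (0:ℝ) ≤ ‖w1 - wstar‖ := norm_nonneg _
          have s1 : lam * ‖w1 - wstar‖^2 ≤ G * ‖w1 - wstar‖ := by
            nlinarith [mul_le_mul_of_nonneg_right hgn hn]
          have s2 : lam * (lam * ‖w1 - wstar‖^2) ≤ lam * (G * ‖w1 - wstar‖) :=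
            mul_le_mul_of_nonneg_left s1 hlam.le
          have key : lam^2 * ‖w1 - wstar‖^2 ≤ G^2 := by
            nlinarith [sq_nonneg (lam * ‖w1 - wstar‖ - G)]
          rw [le_div_iff₀ (by positivity)]
          nlinarith [key]
        rw [hA1]
        push_cast
        have : 2*G^2/(lam^2*1) = 2*(G^2/lam^2) := by ring
        rw [this]
        have hpos : 0 ≤ G^2/lam^2 := by positivity
        linarith
      · have hn : 1 ≤ n := Nat.one_le_iff_ne_zero.2 hn0
        have hAn := ih hn
        have hr := hrec n hn
        have hnpos : (0:ℝ) < n := by exact_mod_cast hn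
        by_cases h2 : 2 ≤ n
        · have hcoef : (0:ℝ) ≤ 1 - 2/(n:ℝ) := by
            rw [sub_nonneg, div_le_one hnpos]; exact_mod_cast h2
          have step1 : A (n+1) ≤ (1 - 2/(n:ℝ)) * (2*G^2/(lam^2*n)) + G^2/(lam^2*(n:ℝ)^2) := by
            have hmul := mul_le_mul_of_nonneg_left hAn hcoef
            nlinarith [hr]
          have step2 : (1 - 2/(n:ℝ))*(2*G^2/(lam^2*n)) + G^2/(lam^2*(n:ℝ)^2)
              = G^2*(2*(n:ℝ)-3)/(lam^2*(n:ℝ)^2) := by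
            field_simp
            ring
          rw [step2] at step1
          refine le_trans step1 ?_
          rw [div_le_div_iff₀ (by positivity) (by positivity)]
          push_cast
          nlinarith [sq_nonneg G, sq_nonneg lam, hnpos, sq_nonneg (G*lam)]
        · have hn1 : n = 1 := by omega
          subst hn1
          have h0 := hA0 1
          have hr1 : A 2 ≤ G^2/lam^2 := by
            norm_num at hr
            linarith
          have e3 : 2*G^2/(lam^2*((1+1:ℕ):ℝ)) = G^2/lam^2 := by
            push_cast
            field_simp
          rw [e3]
          exact hr1
  -- conclusion
  have hAT := hmain T hT
  have hTpos : (0:ℝ) < T := by exact_mod_cast hT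
  have hFcont : Continuous F := continuous_iff_continuousAt.2
    fun x => (hF x).differentiableAt.continuousAt
  have hintFsub : Integrable (fun ω => F (w T ω) - F wstar) ℙ := by
    refine Integrable.mono' ((hInt_v2 T hT).const_mul μ)
      (((hFcont.comp_aestronglyMeasurable (hwL2 T hT).1)).sub aestronglyMeasurable_const)
      (Filter.Eventually.of_forall fun ω => ?_)
    rw [Real.norm_eq_abs, abs_of_nonneg (hFlb _)]
    exact hFub _
  have hintF : Integrable (fun ω => F (w T ω)) ℙ := by
    refine (hintFsub.add (integrable_const (F wstar))).congr
      (Filter.Eventually.of_forall fun ω => ?_)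
    simp
  have hsplit : (∫ ω, F (w T ω) ∂ℙ) - F wstar = ∫ ω, (F (w T ω) - F wstar) ∂ℙ := by
    rw [integral_sub hintF (integrable_const _), integral_const]
    simp
  rw [hsplit]
  calc ∫ ω, (F (w T ω) - F wstar) ∂ℙ ≤ ∫ ω, μ * ‖w T ω - wstar‖^2 ∂ℙ :=
        integral_mono hintFsub ((hInt_v2 T hT).const_mul μ) fun ω => hFub _
    _ = μ * A T := integral_const_mul _ _
    _ ≤ μ * (2*G^2/(lam^2*T)) := by nlinarith [hAT]
    _ = 2 * μ * G ^ 2 / (lam ^ 2 * T) := by ring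
end

section
/- Let d ≥ 1, let F : ℝ^d → ℝ be differentiable and λ-strongly convex with λ > 0, let G ≥ 0, and let w* ∈ ℝ^d satisfy ∇F(w*) = 0. On a probability space, let (w_t)_{t≥1} and (ĝ_t)_{t≥1} be sequences of square-integrable random vectors in ℝ^d such that w_1 is deterministic, for every t the conditional expectation of ĝ_t given σ(w_1, …, w_t) equals ∇F(w_t) almost surely, E[‖ĝ_t‖²] ≤ G², and w_{t+1} = w_t − (1/(λ t)) ĝ_t. Then for every T ≥ 1, E[‖w_T − w*‖²] ≤ 4 G² / (λ² T). -/
open MeasureTheory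
open scoped RealInnerProductSpace

section SGDAux

variable {α : Type*} {m m0 : MeasurableSpace α} {μ : Measure α}

lemma sgd_integrable_inner {E : Type*} [NormedAddCommGroup E] [InnerProductSpace ℝ E]
    {f g : α → E} (hf : MemLp f 2 μ) (hg : MemLp g 2 μ) :
    Integrable (fun ω => ⟪f ω, g ω⟫) μ := by
  have h := L2.integrable_inner (𝕜 := ℝ) (hf.toLp f) (hg.toLp g)
  refine h.congr ?_
  filter_upwards [hf.coeFn_toLp, hg.coeFn_toLp] with ω h1 h2
  rw [h1, h2]

lemma sgd_sq_integral_le {f : α → ℝ} [IsProbabilityMeasure μ] (hf : MemLp f 2 μ) :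
    (∫ x, f x ∂μ) ^ 2 ≤ ∫ x, f x ^ 2 ∂μ := by
  set c := ∫ x, f x ∂μ with hc
  have h2 : Integrable (fun x => f x ^ 2) μ := hf.integrable_sq
  have h1 : Integrable f μ := hf.integrable one_le_two
  have h0 : 0 ≤ ∫ x, (f x - c) ^ 2 ∂μ := integral_nonneg fun x => sq_nonneg _
  have he : (fun x => (f x - c) ^ 2) = fun x => f x ^ 2 - 2 * c * f x + c ^ 2 := by
    funext x; ring
  have hsub : Integrable (fun x => f x ^ 2 - 2 * c * f x) μ := h2.sub (h1.const_mul (2 * c))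
  have hcm : Integrable (fun x => 2 * c * f x) μ := h1.const_mul (2 * c)
  rw [he, integral_add hsub (integrable_const _),
    integral_sub h2 hcm, integral_const_mul, integral_const] at h0
  simp only [measure_univ, ENNReal.toReal_one, smul_eq_mul, one_mul, probReal_univ] at h0
  nlinarith [h0]

lemma sgd_condExp_clm {E F : Type*} [NormedAddCommGroup E] [NormedSpace ℝ E] [CompleteSpace E]
    [NormedAddCommGroup F] [NormedSpace ℝ F] [CompleteSpace F]
    (hm : m ≤ m0) (μ : Measure α) [IsFiniteMeasure μ] {g : α → E}
    (hg : Integrable g μ) (L : E →L[ℝ] F) :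
    μ[fun ω => L (g ω)|m] =ᵐ[μ] fun ω => L ((μ[g|m]) ω) := by
  refine (ae_eq_condExp_of_forall_setIntegral_eq hm (L.integrable_comp hg)
    (fun s _ _ => (L.integrable_comp integrable_condExp).integrableOn)
    (fun s hs hμs => ?_) ?_).symm
  · rw [L.integral_comp_comm integrable_condExp.integrableOn,
      L.integral_comp_comm hg.integrableOn, setIntegral_condExp hm hg hs]
  · exact (L.continuous.comp_stronglyMeasurable stronglyMeasurable_condExp).aestronglyMeasurable

lemma sgd_arith {C u x y : ℝ} (hC : 0 ≤ C) (hu : 1 ≤ u) (hx0 : 0 ≤ x) (hx : x ≤ 4 * C / u)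
    (hy : y ≤ (1 - 2 / u) * x + C / u ^ 2) : y ≤ 4 * C / (u + 1) := by
  have hu0 : 0 < u := by linarith
  rcases le_or_gt 2 u with h2 | h2
  · have hpos : 0 ≤ 1 - 2 / u := by
      rw [sub_nonneg, div_le_one hu0]; linarith
    have hmul : (1 - 2 / u) * x ≤ (1 - 2 / u) * (4 * C / u) :=
      mul_le_mul_of_nonneg_left hx hpos
    have he : (1 - 2 / u) * (4 * C / u) + C / u ^ 2 = (4 * C * u - 7 * C) / u ^ 2 := by
      field_simp; ring
    have hle : (4 * C * u - 7 * C) / u ^ 2 ≤ 4 * C / (u + 1) := by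
      rw [div_le_div_iff₀ (by positivity) (by positivity)]
      nlinarith
    linarith
  · have hneg : 1 - 2 / u ≤ 0 := by
      rw [sub_nonpos, le_div_iff₀ hu0]; nlinarith
    have h3 : (1 - 2 / u) * x ≤ 0 := mul_nonpos_iff.mpr (Or.inr ⟨hneg, hx0⟩)
    have h4 : C / u ^ 2 ≤ C := by
      rw [div_le_iff₀ (by positivity)]
      have h6 : (1:ℝ) ≤ u ^ 2 := by nlinarith
      nlinarith [mul_le_mul_of_nonneg_left h6 hC]
    have h5 : C ≤ 4 * C / (u + 1) := by
      rw [le_div_iff₀ (by positivity)]; nlinarith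
    linarith

end SGDAux

/-- Rakhlin et al.'s intermediate estimate for the paper's Theorem 1: SGD iterates with
step size `1/(λ t)` and unbiased gradient estimates of bounded second moment `G²`
converge to the minimizer of a `λ`-strongly convex objective at rate `4G²/(λ²T)`
in mean square. -/
theorem sgd_iterate_mean_square_convergence
    (d : ℕ) (hd : 1 ≤ d)
    (F : EuclideanSpace ℝ (Fin d) → ℝ)
    (gradF : EuclideanSpace ℝ (Fin d) → EuclideanSpace ℝ (Fin d))
    (hF : ∀ x, HasGradientAt F (gradF x) x)
    (lam G : ℝ) (hlam : 0 < lam) (hG : 0 ≤ G)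
    (hstrong : ∀ x y, F y ≥ F x + ⟪gradF x, y - x⟫ + (lam / 2) * ‖y - x‖ ^ 2)
    (wstar : EuclideanSpace ℝ (Fin d)) (hstar : gradF wstar = 0)
    {Ω : Type*} [MeasurableSpace Ω] (ℙ : Measure Ω) [IsProbabilityMeasure ℙ]
    (w g : ℕ → Ω → EuclideanSpace ℝ (Fin d))
    (hwL2 : ∀ t, 1 ≤ t → MemLp (w t) 2 ℙ)
    (hgL2 : ∀ t, 1 ≤ t → MemLp (g t) 2 ℙ)
    (w1 : EuclideanSpace ℝ (Fin d)) (hw1 : ∀ ω, w 1 ω = w1)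
    (hunbiased : ∀ t, 1 ≤ t →
      condExp (⨆ i ∈ Finset.Icc 1 t, MeasurableSpace.comap (w i) inferInstance) ℙ (g t)
        =ᵐ[ℙ] fun ω => gradF (w t ω))
    (hmom : ∀ t, 1 ≤ t → ∫ ω, ‖g t ω‖ ^ 2 ∂ℙ ≤ G ^ 2)
    (hupdate : ∀ t, 1 ≤ t → ∀ ω, w (t + 1) ω = w t ω - (1 / (lam * t)) • g t ω)
    (T : ℕ) (hT : 1 ≤ T) :
    ∫ ω, ‖w T ω - wstar‖ ^ 2 ∂ℙ ≤ 4 * G ^ 2 / (lam ^ 2 * T) := by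
  classical
  rename_i mΩ hProbInst
  set C : ℝ := G ^ 2 / lam ^ 2 with hCdef
  have hC0 : 0 ≤ C := by positivity
  -- pointwise strong monotonicity of the gradient
  have hmono : ∀ x : EuclideanSpace ℝ (Fin d),
      lam * ‖x - wstar‖ ^ 2 ≤ ⟪x - wstar, gradF x⟫ := by
    intro x
    have h1 := hstrong x wstar
    have h2 := hstrong wstar x
    rw [hstar, inner_zero_left] at h2
    have hi : ⟪gradF x, wstar - x⟫ = -⟪gradF x, x - wstar⟫ := by
      rw [← neg_sub x wstar, inner_neg_right]
    have hcomm : ⟪x - wstar, gradF x⟫ = ⟪gradF x, x - wstar⟫ := real_inner_comm _ _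
    have hn : ‖wstar - x‖ = ‖x - wstar‖ := norm_sub_rev _ _
    rw [hi, hn] at h1
    rw [hcomm]
    linarith
  have hXL2 : ∀ t, 1 ≤ t → MemLp (fun ω => w t ω - wstar) 2 ℙ :=
    fun t ht => (hwL2 t ht).sub (memLp_const wstar)
  have hinner_eq : ∀ u v : EuclideanSpace ℝ (Fin d), ⟪u, v⟫ = ∑ i, u i * v i := by
    intro u v
    simp [PiLp.inner_apply, RCLike.inner_apply, conj_trivial, mul_comm]
  -- key identity: E⟪w_t - w*, g_t⟫ = E⟪w_t - w*, ∇F(w_t)⟫, plus integrability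
  have hkey : ∀ t, 1 ≤ t →
      (∫ ω, ⟪w t ω - wstar, g t ω⟫ ∂ℙ = ∫ ω, ⟪w t ω - wstar, gradF (w t ω)⟫ ∂ℙ) ∧
      Integrable (fun ω => ⟪w t ω - wstar, gradF (w t ω)⟫) ℙ := by
    intro t ht
    have hu := hunbiased t ht
    set m : MeasurableSpace Ω := ⨆ i ∈ Finset.Icc 1 t, MeasurableSpace.comap (w i) inferInstance
      with hmdef
    by_cases hm : m ≤ mΩ
    · -- the σ-algebra is a genuine sub-σ-algebra
      have hwtm : Measurable[m] (w t) := by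
        have hle : MeasurableSpace.comap (w t) inferInstance ≤ m := by
          rw [hmdef]
          exact le_iSup₂ (f := fun (i : ℕ) (_ : i ∈ Finset.Icc 1 t) =>
            MeasurableSpace.comap (w i) inferInstance) t (Finset.mem_Icc.mpr ⟨ht, le_rfl⟩)
        exact measurable_iff_comap_le.mpr hle
      have hXm : StronglyMeasurable[m] (fun ω => w t ω - wstar) :=
        (hwtm.sub measurable_const).stronglyMeasurable
      have hgint : Integrable (g t) ℙ := (hgL2 t ht).integrable one_le_two
      have comp : ∀ i : Fin d,
          (∫ ω, (w t ω - wstar) i * g t ω i ∂ℙ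
            = ∫ ω, (w t ω - wstar) i * gradF (w t ω) i ∂ℙ) ∧
          Integrable (fun ω => (w t ω - wstar) i * gradF (w t ω) i) ℙ ∧
          Integrable (fun ω => (w t ω - wstar) i * g t ω i) ℙ := by
        intro i
        have hXi2 : MemLp (fun ω => (w t ω - wstar) i) 2 ℙ :=
          (EuclideanSpace.proj (𝕜 := ℝ) i).comp_memLp' (hXL2 t ht)
        have hgi2 : MemLp (fun ω => g t ω i) 2 ℙ :=
          (EuclideanSpace.proj (𝕜 := ℝ) i).comp_memLp' (hgL2 t ht)
        have hXiM : StronglyMeasurable[m] (fun ω => (w t ω - wstar) i) :=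
          (EuclideanSpace.proj (𝕜 := ℝ) i).continuous.comp_stronglyMeasurable hXm
        have hmulint : Integrable (fun ω => (w t ω - wstar) i * g t ω i) ℙ := by
          have h := sgd_integrable_inner hXi2 hgi2
          simpa [RCLike.inner_apply, conj_trivial, mul_comm] using h
        have hcond : ℙ[(fun ω => g t ω i)|m] =ᵐ[ℙ] fun ω => gradF (w t ω) i := by
          have h1 : ℙ[(fun ω => (EuclideanSpace.proj (𝕜 := ℝ) i) (g t ω))|m]
              =ᵐ[ℙ] fun ω => (EuclideanSpace.proj (𝕜 := ℝ) i) ((ℙ[g t|m]) ω) :=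
            sgd_condExp_clm hm ℙ hgint _
          refine h1.trans ?_
          filter_upwards [hu] with ω hω
          simp [hω]
        have hpull : ℙ[(fun ω => (w t ω - wstar) i * g t ω i)|m]
            =ᵐ[ℙ] fun ω => (w t ω - wstar) i * (ℙ[(fun ω => g t ω i)|m]) ω :=
          condExp_mul_of_stronglyMeasurable_left hXiM hmulint (hgi2.integrable one_le_two)
        have h2 : (fun ω => (w t ω - wstar) i * (ℙ[(fun ω => g t ω i)|m]) ω)
            =ᵐ[ℙ] fun ω => (w t ω - wstar) i * gradF (w t ω) i := by
          filter_upwards [hcond] with ω hω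
          rw [hω]
        refine ⟨?_, integrable_condExp.congr (hpull.trans h2), hmulint⟩
        calc ∫ ω, (w t ω - wstar) i * g t ω i ∂ℙ
            = ∫ ω, (ℙ[(fun ω => (w t ω - wstar) i * g t ω i)|m]) ω ∂ℙ :=
              (integral_condExp hm).symm
          _ = ∫ ω, (w t ω - wstar) i * gradF (w t ω) i ∂ℙ :=
              integral_congr_ae (hpull.trans h2)
      have hint2 : Integrable (fun ω => ⟪w t ω - wstar, gradF (w t ω)⟫) ℙ := by
        have h := integrable_finset_sum (μ := ℙ) Finset.univ
          (fun i _ => (comp i).2.1)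
        refine h.congr (Filter.Eventually.of_forall fun ω => ?_)
        simp only [hinner_eq]
      refine ⟨?_, hint2⟩
      calc ∫ ω, ⟪w t ω - wstar, g t ω⟫ ∂ℙ
          = ∫ ω, ∑ i, (w t ω - wstar) i * g t ω i ∂ℙ := by
            refine integral_congr_ae (Filter.Eventually.of_forall fun ω => ?_)
            simp only [hinner_eq]
        _ = ∑ i, ∫ ω, (w t ω - wstar) i * g t ω i ∂ℙ :=
            integral_finset_sum _ (fun i _ => (comp i).2.2)
        _ = ∑ i, ∫ ω, (w t ω - wstar) i * gradF (w t ω) i ∂ℙ := by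
            exact Finset.sum_congr rfl fun i _ => (comp i).1
        _ = ∫ ω, ∑ i, (w t ω - wstar) i * gradF (w t ω) i ∂ℙ :=
            (integral_finset_sum _ (fun i _ => (comp i).2.1)).symm
        _ = ∫ ω, ⟪w t ω - wstar, gradF (w t ω)⟫ ∂ℙ := by
            refine integral_congr_ae (Filter.Eventually.of_forall fun ω => ?_)
            simp only [hinner_eq]
    · -- degenerate case: the conditional expectation is identically 0
      rw [condExp_of_not_le hm] at hu
      have hz : ∀ᵐ ω ∂ℙ, gradF (w t ω) = 0 := by
        filter_upwards [hu] with ω hω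
        exact hω.symm
      have hX0 : ∀ᵐ ω ∂ℙ, w t ω - wstar = 0 := by
        filter_upwards [hz] with ω hω
        have hmx := hmono (w t ω)
        rw [hω, inner_zero_right] at hmx
        rw [← mul_zero lam] at hmx
        have hsq : ‖w t ω - wstar‖ ^ 2 ≤ 0 := le_of_mul_le_mul_left hmx hlam
        have hns : ‖w t ω - wstar‖ = 0 :=
          pow_eq_zero_iff two_ne_zero |>.mp (le_antisymm hsq (sq_nonneg _))
        exact norm_eq_zero.mp hns
      have e1 : (fun ω => ⟪w t ω - wstar, g t ω⟫) =ᵐ[ℙ] fun _ => (0:ℝ) := by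
        filter_upwards [hX0] with ω hω
        rw [hω, inner_zero_left]
      have e2 : (fun ω => ⟪w t ω - wstar, gradF (w t ω)⟫) =ᵐ[ℙ] fun _ => (0:ℝ) := by
        filter_upwards [hX0] with ω hω
        rw [hω, inner_zero_left]
      refine ⟨?_, (integrable_const (0:ℝ)).congr e2.symm⟩
      rw [integral_congr_ae e1, integral_congr_ae e2]
  have ha0 : ∀ t : ℕ, 0 ≤ ∫ ω, ‖w t ω - wstar‖ ^ 2 ∂ℙ :=
    fun t => integral_nonneg fun ω => sq_nonneg _
  -- lower bound on the cross term
  have hIneq : ∀ t, 1 ≤ t →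
      lam * ∫ ω, ‖w t ω - wstar‖ ^ 2 ∂ℙ ≤ ∫ ω, ⟪w t ω - wstar, g t ω⟫ ∂ℙ := by
    intro t ht
    obtain ⟨heq, hint⟩ := hkey t ht
    rw [heq]
    have hAi : Integrable (fun ω => lam * ‖w t ω - wstar‖ ^ 2) ℙ :=
      ((hXL2 t ht).norm.integrable_sq).const_mul lam
    calc lam * ∫ ω, ‖w t ω - wstar‖ ^ 2 ∂ℙ
        = ∫ ω, lam * ‖w t ω - wstar‖ ^ 2 ∂ℙ := (integral_const_mul _ _).symm
      _ ≤ ∫ ω, ⟪w t ω - wstar, gradF (w t ω)⟫ ∂ℙ :=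
          integral_mono hAi hint fun ω => hmono (w t ω)
  -- one-step recursion
  have hstep : ∀ t, 1 ≤ t →
      ∫ ω, ‖w (t + 1) ω - wstar‖ ^ 2 ∂ℙ
        ≤ (1 - 2 / (t : ℝ)) * ∫ ω, ‖w t ω - wstar‖ ^ 2 ∂ℙ + C / (t : ℝ) ^ 2 := by
    intro t ht
    have htR : (1:ℝ) ≤ (t : ℝ) := by exact_mod_cast ht
    have htpos : (0:ℝ) < (t : ℝ) := by linarith
    set η : ℝ := 1 / (lam * t) with hη
    have hηpos : 0 < η := by positivity
    have hexp : ∀ ω, ‖w (t + 1) ω - wstar‖ ^ 2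
        = ‖w t ω - wstar‖ ^ 2 - (2 * η) * ⟪w t ω - wstar, g t ω⟫ + η ^ 2 * ‖g t ω‖ ^ 2 := by
      intro ω
      rw [hupdate t ht ω, sub_right_comm, norm_sub_sq_real, real_inner_smul_right, norm_smul,
        Real.norm_eq_abs, mul_pow, sq_abs]
      ring
    have hA : Integrable (fun ω => ‖w t ω - wstar‖ ^ 2) ℙ := (hXL2 t ht).norm.integrable_sq
    have hB : Integrable (fun ω => (2 * η) * ⟪w t ω - wstar, g t ω⟫) ℙ :=
      (sgd_integrable_inner (hXL2 t ht) (hgL2 t ht)).const_mul _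
    have hCg : Integrable (fun ω => η ^ 2 * ‖g t ω‖ ^ 2) ℙ :=
      ((hgL2 t ht).norm.integrable_sq).const_mul _
    have hval : ∫ ω, ‖w (t + 1) ω - wstar‖ ^ 2 ∂ℙ
        = ∫ ω, ‖w t ω - wstar‖ ^ 2 ∂ℙ
          - (2 * η) * ∫ ω, ⟪w t ω - wstar, g t ω⟫ ∂ℙ
          + η ^ 2 * ∫ ω, ‖g t ω‖ ^ 2 ∂ℙ := by
      have hsub : Integrable
          (fun ω => ‖w t ω - wstar‖ ^ 2 - (2 * η) * ⟪w t ω - wstar, g t ω⟫) ℙ := hA.sub hB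
      calc ∫ ω, ‖w (t + 1) ω - wstar‖ ^ 2 ∂ℙ
          = ∫ ω, (‖w t ω - wstar‖ ^ 2 - (2 * η) * ⟪w t ω - wstar, g t ω⟫
              + η ^ 2 * ‖g t ω‖ ^ 2) ∂ℙ :=
            integral_congr_ae (Filter.Eventually.of_forall fun ω => hexp ω)
        _ = _ := by
            rw [integral_add hsub hCg, integral_sub hA hB, integral_const_mul, integral_const_mul]
    rw [hval]
    have h1 : (2 * η) * (lam * ∫ ω, ‖w t ω - wstar‖ ^ 2 ∂ℙ)
        ≤ (2 * η) * ∫ ω, ⟪w t ω - wstar, g t ω⟫ ∂ℙ :=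
      mul_le_mul_of_nonneg_left (hIneq t ht) (by positivity)
    have h2 : η ^ 2 * ∫ ω, ‖g t ω‖ ^ 2 ∂ℙ ≤ η ^ 2 * G ^ 2 :=
      mul_le_mul_of_nonneg_left (hmom t ht) (sq_nonneg η)
    have he1 : (2 * η) * (lam * ∫ ω, ‖w t ω - wstar‖ ^ 2 ∂ℙ)
        = (2 / (t : ℝ)) * ∫ ω, ‖w t ω - wstar‖ ^ 2 ∂ℙ := by
      rw [hη]
      field_simp
    have he2 : η ^ 2 * G ^ 2 = C / (t : ℝ) ^ 2 := by
      rw [hη, hCdef, div_pow, one_pow, mul_pow, div_div, one_div, inv_mul_eq_div]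
    linarith [h1, h2, he1.symm.le]
  -- bound on the gradient at the (deterministic) initial point
  have hgradw1 : ‖gradF w1‖ ^ 2 ≤ G ^ 2 := by
    have hu := hunbiased 1 le_rfl
    by_cases hm : (⨆ i ∈ Finset.Icc 1 1, MeasurableSpace.comap (w i) inferInstance)
        ≤ mΩ
    · have hgint : Integrable (g 1) ℙ := (hgL2 1 le_rfl).integrable one_le_two
      have h1 : ∫ ω, (ℙ[g 1|⨆ i ∈ Finset.Icc 1 1, MeasurableSpace.comap (w i) inferInstance]) ω ∂ℙ
          = ∫ ω, g 1 ω ∂ℙ := integral_condExp hm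
      have h2 : ∫ ω, (ℙ[g 1|⨆ i ∈ Finset.Icc 1 1, MeasurableSpace.comap (w i) inferInstance]) ω ∂ℙ
          = gradF w1 := by
        rw [integral_congr_ae hu]
        simp only [hw1]
        simp [measure_univ]
      have hEg : ∫ ω, g 1 ω ∂ℙ = gradF w1 := by rw [← h1, h2]
      have hnorm : ‖gradF w1‖ ≤ ∫ ω, ‖g 1 ω‖ ∂ℙ := by
        rw [← hEg]
        exact norm_integral_le_integral_norm _
      have hsq : (∫ ω, ‖g 1 ω‖ ∂ℙ) ^ 2 ≤ ∫ ω, ‖g 1 ω‖ ^ 2 ∂ℙ :=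
        sgd_sq_integral_le ((hgL2 1 le_rfl).norm)
      have hnn : (0:ℝ) ≤ ∫ ω, ‖g 1 ω‖ ∂ℙ := integral_nonneg fun ω => norm_nonneg _
      nlinarith [hmom 1 le_rfl, norm_nonneg (gradF w1)]
    · rw [condExp_of_not_le hm] at hu
      haveI : (ae ℙ).NeBot := ae_neBot.mpr (IsProbabilityMeasure.ne_zero ℙ)
      obtain ⟨ω, hω⟩ := hu.exists
      have h0 : gradF (w 1 ω) = 0 := by simpa using hω.symm
      rw [hw1 ω] at h0
      rw [h0]
      simpa using sq_nonneg G
  -- base case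
  have hbase : ∫ ω, ‖w 1 ω - wstar‖ ^ 2 ∂ℙ ≤ C := by
    have ha1 : ∫ ω, ‖w 1 ω - wstar‖ ^ 2 ∂ℙ = ‖w1 - wstar‖ ^ 2 := by
      simp only [hw1]
      simp [measure_univ]
    rw [ha1, hCdef, le_div_iff₀ (by positivity : (0:ℝ) < lam ^ 2)]
    have hm1 := hmono w1
    have hcs : ⟪w1 - wstar, gradF w1⟫ ≤ ‖w1 - wstar‖ * ‖gradF w1‖ := real_inner_le_norm _ _
    nlinarith [sq_nonneg (lam * ‖w1 - wstar‖ - ‖gradF w1‖), norm_nonneg (w1 - wstar),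
      norm_nonneg (gradF w1), mul_le_mul_of_nonneg_left (hm1.trans hcs) hlam.le]
  -- induction
  have hmain : ∀ t, 1 ≤ t → ∫ ω, ‖w t ω - wstar‖ ^ 2 ∂ℙ ≤ 4 * C / (t : ℝ) := by
    intro t ht
    induction t, ht using Nat.le_induction with
    | base =>
      simp only [Nat.cast_one, div_one]
      linarith [hbase]
    | succ n hn ih =>
      have hnR : (1:ℝ) ≤ (n : ℝ) := by exact_mod_cast hn
      have harith := sgd_arith hC0 hnR (ha0 n) ih (hstep n hn)
      have hcast : ((n + 1 : ℕ) : ℝ) = (n : ℝ) + 1 := by push_cast; ring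
      rw [hcast]
      exact harith
  have hfin := hmain T hT
  have hTpos : (0:ℝ) < (T : ℝ) := by exact_mod_cast hT
  have heq : 4 * C / (T : ℝ) = 4 * G ^ 2 / (lam ^ 2 * T) := by
    rw [hCdef]
    field_simp
  rw [← heq]
  exact hfin
end

section
/- Let d ≥ 1, let F : ℝ^d → ℝ be differentiable and λ-strongly convex with λ > 0, and let w* ∈ ℝ^d satisfy ∇F(w*) = 0. On a probability space, let w be a square-integrable random vector in ℝ^d, and let ĝ be a square-integrable random vector in ℝ^d such that the conditional expectation of ĝ given σ(w) equals ∇F(w) almost surely and E[‖ĝ‖²] ≤ G² for some G ≥ 0. Then for every step size η > 0, E[‖(w − η ĝ) − w*‖²] ≤ (1 − 2 η λ) · E[‖w − w*‖²] + η² G². -/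
open MeasureTheory
open scoped RealInnerProductSpace

section Aux

variable {Ω : Type*} [MeasurableSpace Ω] {μ : Measure Ω}
  {E : Type*} [NormedAddCommGroup E] [InnerProductSpace ℝ E]

lemma integrable_inner_of_memL2 {f g : Ω → E}
    (hf : MemLp f 2 μ) (hg : MemLp g 2 μ) :
    Integrable (fun ω => ⟪f ω, g ω⟫) μ := by
  have h := L2.integrable_inner (𝕜 := ℝ) (hf.toLp f) (hg.toLp g)
  refine h.congr ?_
  filter_upwards [hf.coeFn_toLp, hg.coeFn_toLp] with ω h1 h2
  rw [h1, h2]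

end Aux

/-- One-step contraction inequality for SGD on a `λ`-strongly convex objective:
`E[‖(w − η ĝ) − w*‖²] ≤ (1 − 2ηλ) E[‖w − w*‖²] + η² G²`. -/
theorem sgd_one_step_contraction
    (d : ℕ) (hd : 1 ≤ d)
    (F : EuclideanSpace ℝ (Fin d) → ℝ)
    (gradF : EuclideanSpace ℝ (Fin d) → EuclideanSpace ℝ (Fin d))
    (hF : ∀ x, HasGradientAt F (gradF x) x)
    (lam : ℝ) (hlam : 0 < lam)
    (hstrong : ∀ x y, F y ≥ F x + ⟪gradF x, y - x⟫ + (lam / 2) * ‖y - x‖ ^ 2)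
    (wstar : EuclideanSpace ℝ (Fin d)) (hstar : gradF wstar = 0)
    {Ω : Type*} [MeasurableSpace Ω] (ℙ : Measure Ω) [IsProbabilityMeasure ℙ]
    (w g : Ω → EuclideanSpace ℝ (Fin d))
    (hwL2 : MemLp w 2 ℙ) (hgL2 : MemLp g 2 ℙ)
    (hunbiased : condExp (MeasurableSpace.comap w inferInstance) ℙ g
      =ᵐ[ℙ] fun ω => gradF (w ω))
    (G : ℝ) (hG : 0 ≤ G)
    (hmom : ∫ ω, ‖g ω‖ ^ 2 ∂ℙ ≤ G ^ 2)
    (η : ℝ) (hη : 0 < η) :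
    ∫ ω, ‖(w ω - η • g ω) - wstar‖ ^ 2 ∂ℙ
      ≤ (1 - 2 * η * lam) * ∫ ω, ‖w ω - wstar‖ ^ 2 ∂ℙ + η ^ 2 * G ^ 2 := by
  classical
  -- pointwise strong-convexity consequence
  have key : ∀ x : EuclideanSpace ℝ (Fin d),
      lam * ‖x - wstar‖ ^ 2 ≤ ⟪gradF x, x - wstar⟫ := by
    intro x
    have h1 := hstrong x wstar
    have h2 := hstrong wstar x
    rw [hstar, inner_zero_left] at h2
    have e1 : ⟪gradF x, wstar - x⟫ = -⟪gradF x, x - wstar⟫ := by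
      rw [← neg_sub, inner_neg_right]
    have e2 : ‖wstar - x‖ = ‖x - wstar‖ := norm_sub_rev _ _
    rw [e1, e2] at h1
    linarith
  have hhL2 : MemLp (fun ω => w ω - wstar) 2 ℙ := hwL2.sub (memLp_const wstar)
  have hint_h2 : Integrable (fun ω => ‖w ω - wstar‖ ^ 2) ℙ :=
    (memLp_two_iff_integrable_sq_norm hhL2.1).mp hhL2
  have hint_g2 : Integrable (fun ω => ‖g ω‖ ^ 2) ℙ :=
    (memLp_two_iff_integrable_sq_norm hgL2.1).mp hgL2
  have hint_inner : Integrable (fun ω => ⟪w ω - wstar, g ω⟫) ℙ :=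
    integrable_inner_of_memL2 hhL2 hgL2
  have expand : ∀ ω, ‖(w ω - η • g ω) - wstar‖ ^ 2
      = ‖w ω - wstar‖ ^ 2 - 2 * η * ⟪w ω - wstar, g ω⟫ + η ^ 2 * ‖g ω‖ ^ 2 := by
    intro ω
    have hrw : (w ω - η • g ω) - wstar = (w ω - wstar) - η • g ω := by
      abel
    rw [hrw, norm_sub_sq_real, inner_smul_right, norm_smul, Real.norm_eq_abs, mul_pow,
      sq_abs]
    ring
  have LHS_eq : ∫ ω, ‖(w ω - η • g ω) - wstar‖ ^ 2 ∂ℙ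
      = ∫ ω, ‖w ω - wstar‖ ^ 2 ∂ℙ - 2 * η * ∫ ω, ⟪w ω - wstar, g ω⟫ ∂ℙ
        + η ^ 2 * ∫ ω, ‖g ω‖ ^ 2 ∂ℙ := by
    have hI1 : Integrable
        (fun a => ‖w a - wstar‖ ^ 2 - 2 * η * ⟪w a - wstar, g a⟫) ℙ :=
      hint_h2.sub (hint_inner.const_mul _)
    have hI2 : Integrable (fun a => (2 * η) * ⟪w a - wstar, g a⟫) ℙ :=
      hint_inner.const_mul _
    have hI3 : Integrable (fun a => η ^ 2 * ‖g a‖ ^ 2) ℙ := hint_g2.const_mul _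
    rw [integral_congr_ae (Filter.Eventually.of_forall expand),
      integral_add hI1 hI3, integral_sub hint_h2 hI2, integral_const_mul,
      integral_const_mul]
  by_cases hm : MeasurableSpace.comap w inferInstance
      ≤ (inferInstance : MeasurableSpace Ω)
  · -- main case
    have hw_m : Measurable[MeasurableSpace.comap w inferInstance] w :=
      fun s hs => ⟨s, hs, rfl⟩
    have h_sm : StronglyMeasurable[MeasurableSpace.comap w inferInstance]
        (fun ω => w ω - wstar) :=
      (hw_m.sub measurable_const).stronglyMeasurable
    set fL2 := hgL2.toLp g with hfL2_def
    set ψ : Lp (EuclideanSpace ℝ (Fin d)) 2 ℙ :=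
      ↑(condExpL2 (EuclideanSpace ℝ (Fin d)) ℝ hm fL2) with hψ_def
    -- condexpL2 of g equals condexp of g
    have hψ_condexp : ⇑ψ
        =ᵐ[ℙ] condExp (MeasurableSpace.comap w inferInstance) ℙ g := by
      refine ae_eq_condExp_of_forall_setIntegral_eq hm (hgL2.integrable one_le_two)
        (fun s _ _ => (integrable_condExpL2_of_isFiniteMeasure hm).integrableOn)
        (fun s hs hμs => ?_) (aestronglyMeasurable_condExpL2 hm fL2)
      rw [integral_condExpL2_eq hm fL2 hs hμs.ne]
      exact setIntegral_congr_ae (hm s hs)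
        (hgL2.coeFn_toLp.mono fun x hx _ => hx)
    have hψ_eq : ⇑ψ =ᵐ[ℙ] fun ω => gradF (w ω) := hψ_condexp.trans hunbiased
    -- inner product identity through condexpL2
    have hmeas' : AEStronglyMeasurable[MeasurableSpace.comap w inferInstance]
        (⇑(hhL2.toLp (fun ω => w ω - wstar))) ℙ :=
      ⟨fun ω => w ω - wstar, h_sm, hhL2.coeFn_toLp⟩
    have e2 := inner_condExpL2_eq_inner_fun (𝕜 := ℝ) hm fL2
      (hhL2.toLp (fun ω => w ω - wstar)) hmeas'
    rw [L2.inner_def, L2.inner_def] at e2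
    have eB : ∫ ω, ⟪w ω - wstar, g ω⟫ ∂ℙ
        = ∫ ω, ⟪gradF (w ω), w ω - wstar⟫ ∂ℙ := by
      have eL : ∫ ω, ⟪w ω - wstar, g ω⟫ ∂ℙ
          = ∫ ω, ⟪fL2 ω, (hhL2.toLp (fun ω => w ω - wstar)) ω⟫ ∂ℙ := by
        refine integral_congr_ae ?_
        filter_upwards [hgL2.coeFn_toLp, hhL2.coeFn_toLp] with ω h1 h2
        rw [h1, h2, real_inner_comm]
      have eR : ∫ ω, ⟪ψ ω, (hhL2.toLp (fun ω => w ω - wstar)) ω⟫ ∂ℙ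
          = ∫ ω, ⟪gradF (w ω), w ω - wstar⟫ ∂ℙ := by
        refine integral_congr_ae ?_
        filter_upwards [hψ_eq, hhL2.coeFn_toLp] with ω h1 h2
        rw [h1, h2]
      rw [eL, ← e2, eR]
    -- lower bound for the inner product integral
    have hint_inner' : Integrable (fun ω => ⟪gradF (w ω), w ω - wstar⟫) ℙ := by
      have base := L2.integrable_inner (𝕜 := ℝ) ψ
        (hhL2.toLp (fun ω => w ω - wstar))
      refine base.congr ?_
      filter_upwards [hψ_eq, hhL2.coeFn_toLp] with ω h1 h2
      rw [h1, h2]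
    have hB : lam * ∫ ω, ‖w ω - wstar‖ ^ 2 ∂ℙ ≤ ∫ ω, ⟪w ω - wstar, g ω⟫ ∂ℙ := by
      rw [eB, ← integral_const_mul]
      exact integral_mono (hint_h2.const_mul _) hint_inner'
        (fun ω => key (w ω))
    rw [LHS_eq]
    have h1 : 2 * η * (lam * ∫ ω, ‖w ω - wstar‖ ^ 2 ∂ℙ)
        ≤ 2 * η * ∫ ω, ⟪w ω - wstar, g ω⟫ ∂ℙ :=
      mul_le_mul_of_nonneg_left hB (by positivity)
    have h2 : η ^ 2 * ∫ ω, ‖g ω‖ ^ 2 ∂ℙ ≤ η ^ 2 * G ^ 2 :=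
      mul_le_mul_of_nonneg_left hmom (sq_nonneg η)
    nlinarith [h1, h2]
  · -- degenerate case: conditional expectation is zero, so `gradF (w ω) = 0` a.e.
    rw [condExp_of_not_le hm] at hunbiased
    clear hm
    have hwstar : ∀ᵐ ω ∂ℙ, w ω = wstar := by
      filter_upwards [hunbiased] with ω hω
      have hkey := key (w ω)
      rw [← hω] at hkey
      simp only [Pi.zero_apply, inner_zero_left] at hkey
      have hsq : ‖w ω - wstar‖ ^ 2 ≤ 0 := by nlinarith [sq_nonneg ‖w ω - wstar‖]
      have : ‖w ω - wstar‖ = 0 := by nlinarith [norm_nonneg (w ω - wstar), sq_nonneg ‖w ω - wstar‖]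
      rw [norm_eq_zero, sub_eq_zero] at this
      exact this
    have hA : ∫ ω, ‖w ω - wstar‖ ^ 2 ∂ℙ = 0 := by
      rw [integral_eq_zero_iff_of_nonneg (fun ω => sq_nonneg _) hint_h2]
      filter_upwards [hwstar] with ω hω
      simp [hω]
    have hLHS : ∫ ω, ‖(w ω - η • g ω) - wstar‖ ^ 2 ∂ℙ = η ^ 2 * ∫ ω, ‖g ω‖ ^ 2 ∂ℙ := by
      rw [← integral_const_mul]
      refine integral_congr_ae ?_
      filter_upwards [hwstar] with ω hω
      rw [hω]
      have : (wstar - η • g ω) - wstar = -(η • g ω) := by abel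
      rw [this, norm_neg, norm_smul, Real.norm_eq_abs, mul_pow, sq_abs]
    rw [hLHS, hA, mul_zero, zero_add]
    exact mul_le_mul_of_nonneg_left hmom (sq_nonneg η)
end
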